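/- arXiv:2405.02498 — 5 statements merged into one kernel-verified Lean document; each statement's English description precedes it below -/
import Mathlib

section
/- Let x be a vector in R^d with ‖x‖ < 1 and define y = (1 - ‖x‖²)^{-1/2} x. Then the Jacobian determinant of the map x ↦ y equals (1 - ‖x‖²)^{-(d/2 + 1)}. -/
/-!
With `A = 1 - ‖x‖²`, the derivative of `z ↦ (1 - ‖z‖²)^p • z` at `x` is the rank-one perturbation
`A^p • id - 2p A^(p-1) ⟪x, ·⟫ x` of a homothety, so the matrix determinant lemma gives the Jacobian
`A^(p d) (1 - 2p ‖x‖² / A) = A^(p d - 1) (1 - (1 + 2p) ‖x‖²)`. For `p = -1/2` the last factor is `1`.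
-/

open Real

theorem LinearMap.det_id_add_smulRight {R M : Type*} [CommRing R] [AddCommGroup M] [Module R M]
    [Module.Free R M] [Module.Finite R M] (f : M →ₗ[R] R) (v : M) :
    LinearMap.det (LinearMap.id + f.smulRight v) = 1 + f v := by
  let b := Module.Free.chooseBasis R M
  rw [← LinearMap.det_toMatrix b, map_add, LinearMap.toMatrix_id, LinearMap.toMatrix_smulRight,
    Matrix.vecMulVec_eq (ι := Unit), Matrix.det_one_add_replicateCol_mul_replicateRow]
  simp_rw [dotProduct, Function.comp_apply, mul_comm (f _), ← smul_eq_mul, ← map_smul, ← map_sum,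
    b.sum_repr]

theorem LinearMap.det_smul_id_add_smulRight {K M : Type*} [Field K] [AddCommGroup M] [Module K M]
    [FiniteDimensional K M] {c : K} (hc : c ≠ 0) (f : M →ₗ[K] K) (v : M) :
    LinearMap.det (c • LinearMap.id + f.smulRight v) = c ^ Module.finrank K M * (1 + f v / c) := by
  have hfactor :
      c • LinearMap.id + f.smulRight v = c • (LinearMap.id + (c⁻¹ • f).smulRight v) := by
    ext w
    simp [smul_smul, hc]
  rw [hfactor, LinearMap.det_smul, LinearMap.det_id_add_smulRight]
  simp [div_eq_inv_mul]

section InnerProductSpace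

variable {E : Type*} [NormedAddCommGroup E] [InnerProductSpace ℝ E]

theorem hasFDerivAt_one_sub_norm_sq_rpow (p : ℝ) {x : E} (hx : ‖x‖ ≠ 1) :
    HasFDerivAt (fun z : E => (1 - ‖z‖ ^ 2) ^ p)
      ((-2 * p * (1 - ‖x‖ ^ 2) ^ (p - 1)) • innerSL ℝ x) x := by
  have hA : 1 - ‖x‖ ^ 2 ≠ 0 := by
    rwa [sub_ne_zero, ne_comm, Ne, pow_eq_one_iff_of_nonneg (norm_nonneg x) two_ne_zero]
  have hchain := (hasDerivAt_rpow_const (p := p) (Or.inl hA)).comp_hasFDerivAt x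
    ((hasFDerivAt_const (1 : ℝ) x).sub (hasFDerivAt_id x).norm_sq)
  refine hchain.congr_fderiv ?_
  ext v
  simp
  ring

theorem det_fderiv_one_sub_norm_sq_rpow_smul [FiniteDimensional ℝ E] (p : ℝ) {x : E}
    (hx : ‖x‖ < 1) :
    (fderiv ℝ (fun z : E => (1 - ‖z‖ ^ 2) ^ p • z) x).det =
      (1 - ‖x‖ ^ 2) ^ (p * Module.finrank ℝ E - 1) * (1 - (1 + 2 * p) * ‖x‖ ^ 2) := by
  have hA : 0 < 1 - ‖x‖ ^ 2 := by nlinarith [norm_nonneg x]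
  have hf : HasFDerivAt (fun z : E => (1 - ‖z‖ ^ 2) ^ p • z) _ x :=
    (hasFDerivAt_one_sub_norm_sq_rpow p hx.ne).smul (hasFDerivAt_id x)
  rw [hf.fderiv, ContinuousLinearMap.det]
  refine (LinearMap.det_smul_id_add_smulRight (rpow_pos_of_pos hA p).ne'
    ((-2 * p * (1 - ‖x‖ ^ 2) ^ (p - 1)) • innerSL ℝ x : E →L[ℝ] ℝ) x).trans ?_
  rw [← rpow_natCast, ← rpow_mul hA.le, rpow_sub_one hA.ne', rpow_sub_one hA.ne']
  simp only [ContinuousLinearMap.toLinearMap_smul, LinearMap.smul_apply,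
    ContinuousLinearMap.toLinearMap_innerSL_apply, innerₛₗ_apply_apply, real_inner_self_eq_norm_sq,
    smul_eq_mul]
  field_simp
  ring

end InnerProductSpace

theorem jacobian_ball_to_space (d : ℕ) (x : EuclideanSpace ℝ (Fin d)) (hx : ‖x‖ < 1) :
    |(fderiv ℝ (fun z : EuclideanSpace ℝ (Fin d) =>
        ((1 - ‖z‖ ^ 2) ^ (-(1/2 : ℝ))) • z) x).det| =
      (1 - ‖x‖ ^ 2) ^ (-((d : ℝ) / 2 + 1)) := by
  have hA : 0 < 1 - ‖x‖ ^ 2 := by nlinarith [norm_nonneg x]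
  rw [det_fderiv_one_sub_norm_sq_rpow_smul _ hx, finrank_euclideanSpace_fin]
  have hp : 1 + 2 * (-(1 / 2) : ℝ) = 0 := by norm_num
  rw [hp, zero_mul, sub_zero, mul_one, abs_of_pos (rpow_pos_of_pos hA _)]
  ring_nf
end

section
/- Let y be any vector in R^d and define x = (1 + ‖y‖²)^{-1/2} y. Then the Jacobian determinant of the map y ↦ x equals (1 + ‖y‖²)^{-(d/2 + 1)}. -/
/-!
The differential of `z ↦ g z • z` at `y` is `g y • id + (Dg y).smulRight y`, a scalar map plus a
rank-one map, so the matrix determinant lemma gives `g y ^ d * (1 + (g y)⁻¹ * Dg y y)`. For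
`g z = (1 + ‖z‖²) ^ p` this is `(1 + ‖y‖²) ^ (d p - 1) * (1 + (2 p + 1) ‖y‖²)`, and the second
factor is `1` exactly at `p = -1/2`.
-/

open Real Module

theorem LinearMap.det_one_add_smulRight {R M : Type*} [CommRing R] [AddCommGroup M] [Module R M]
    [Module.Free R M] [Module.Finite R M] (f : M →ₗ[R] R) (w : M) :
    LinearMap.det (1 + f.smulRight w) = 1 + f w := by
  classical
  let b := Module.Free.chooseBasis R M
  rw [← LinearMap.det_toMatrix b, map_add, LinearMap.toMatrix_one, LinearMap.toMatrix_smulRight,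
    Matrix.vecMulVec_eq Unit, Matrix.det_one_add_replicateCol_mul_replicateRow]
  congr 1
  calc (f ∘ b) ⬝ᵥ b.repr w = f (∑ i, b.repr w i • b i) := by
        simp only [dotProduct, map_sum, map_smul, smul_eq_mul, Function.comp_apply, mul_comm]
    _ = f w := by rw [b.sum_repr]

theorem LinearMap.det_smul_one_add_smulRight {K V : Type*} [Field K] [AddCommGroup V] [Module K V]
    [FiniteDimensional K V] {a : K} (ha : a ≠ 0) (f : V →ₗ[K] K) (w : V) :
    LinearMap.det (a • 1 + f.smulRight w) = a ^ finrank K V * (1 + a⁻¹ * f w) := by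
  have : a • 1 + f.smulRight w = a • (1 + (a⁻¹ • f).smulRight w) := by
    ext v
    simp [smul_smul, ha]
  rw [this, LinearMap.det_smul, LinearMap.det_one_add_smulRight]
  rfl

theorem HasFDerivAt.det_fderiv_smul_id {𝕜 E : Type*} [NontriviallyNormedField 𝕜]
    [NormedAddCommGroup E] [NormedSpace 𝕜 E] [FiniteDimensional 𝕜 E] {g : E → 𝕜}
    {g' : E →L[𝕜] 𝕜} {y : E} (hg : HasFDerivAt g g' y) (hy : g y ≠ 0) :
    (fderiv 𝕜 (fun z => g z • z) y).det = g y ^ finrank 𝕜 E * (1 + (g y)⁻¹ * g' y) := by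
  change (fderiv 𝕜 (g • id) y).det = _
  rw [(hg.smul (hasFDerivAt_id y)).fderiv]
  exact LinearMap.det_smul_one_add_smulRight hy (g' : E →ₗ[𝕜] 𝕜) y

section

variable {E : Type*} [NormedAddCommGroup E] [InnerProductSpace ℝ E]

theorem hasFDerivAt_one_add_norm_sq_rpow (p : ℝ) (y : E) :
    HasFDerivAt (fun z : E => (1 + ‖z‖ ^ 2) ^ p)
      ((2 * p * (1 + ‖y‖ ^ 2) ^ (p - 1)) • innerSL ℝ y) y := by
  have ht : 1 + ‖y‖ ^ 2 ≠ 0 := by positivity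
  refine (((hasFDerivAt_id y).norm_sq.const_add 1).rpow_const (Or.inl ht)).congr_fderiv ?_
  ext v
  simp
  ring

theorem det_fderiv_one_add_norm_sq_rpow_smul [FiniteDimensional ℝ E] (p : ℝ) (y : E) :
    (fderiv ℝ (fun z : E => (1 + ‖z‖ ^ 2) ^ p • z) y).det =
      (1 + ‖y‖ ^ 2) ^ (finrank ℝ E * p - 1) * (1 + (2 * p + 1) * ‖y‖ ^ 2) := by
  have ht0 : 0 < 1 + ‖y‖ ^ 2 := by positivity
  rw [(hasFDerivAt_one_add_norm_sq_rpow p y).det_fderiv_smul_id (rpow_pos_of_pos ht0 p).ne']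
  simp only [FunLike.coe_smul, Pi.smul_apply, innerSL_apply_apply,
    real_inner_self_eq_norm_sq, smul_eq_mul]
  set t := 1 + ‖y‖ ^ 2 with ht
  rw [← rpow_natCast, ← rpow_mul ht0.le, rpow_sub_one ht0.ne', rpow_sub_one ht0.ne', mul_comm p]
  field_simp
  linear_combination t ^ (finrank ℝ E * p) * ht

end

theorem jacobian_space_to_ball (d : ℕ) (y : EuclideanSpace ℝ (Fin d)) :
    |(fderiv ℝ (fun z : EuclideanSpace ℝ (Fin d) =>
        ((1 + ‖z‖ ^ 2) ^ (-(1/2 : ℝ))) • z) y).det| =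
      (1 + ‖y‖ ^ 2) ^ (-((d : ℝ) / 2 + 1)) := by
  rw [det_fderiv_one_add_norm_sq_rpow_smul, finrank_euclideanSpace_fin,
    abs_of_pos (by positivity)]
  norm_num
  ring_nf
end

section
/- Let h : [0,∞) → [0,∞) be measurable with ∫_{R^N} h(‖x‖²) dx = 1, where N = n₀ + n₁ + ⋯ + n_k. Write x = (x₀, x₁, …, x_k) with x_i ∈ R^{n_i}, let V_i = ‖X_i‖², i = 0, …, k, for X distributed with density h(‖x‖²). Then (V₀, …, V_k) has joint density (π^{N/2}/∏_{i=0}^{k} Γ(n_i/2)) · h(∑_{i=0}^{k} v_i) · ∏_{i=0}^{k} v_i^{n_i/2 - 1} on (0,∞)^{k+1}. -/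
open MeasureTheory Real Set
open scoped ENNReal

noncomputable def ggDens (m : ℕ) : ℝ → ℝ :=
  Set.indicator (Set.Ioi (0 : ℝ))
    (fun v => Real.pi ^ ((m : ℝ) / 2) / Real.Gamma ((m : ℝ) / 2) * v ^ ((m : ℝ) / 2 - 1))

noncomputable def ggCdf (m : ℕ) (t : ℝ) : ℝ :=
  (max t 0) ^ ((m : ℝ) / 2) * (Real.pi ^ ((m : ℝ) / 2) / Real.Gamma ((m : ℝ) / 2 + 1))

lemma ggCdf_nonneg (m : ℕ) (t : ℝ) : 0 ≤ ggCdf m t := by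
  have h1 : (0:ℝ) ≤ (max t 0) ^ ((m : ℝ) / 2) := Real.rpow_nonneg (le_max_right _ _) _
  have h2 : (0:ℝ) ≤ Real.pi ^ ((m : ℝ) / 2) := Real.rpow_nonneg Real.pi_pos.le _
  have h3 : 0 < Real.Gamma ((m : ℝ) / 2 + 1) := Real.Gamma_pos_of_pos (by positivity)
  exact mul_nonneg h1 (div_nonneg h2 h3.le)

lemma measurable_ggDens (m : ℕ) : Measurable (ggDens m) := by
  have hEq : ggDens m = fun v => Set.indicator (Ioi (0:ℝ))
      (fun v => Real.pi ^ ((m:ℝ)/2) / Real.Gamma ((m:ℝ)/2) *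
        Real.exp (Real.log v * ((m:ℝ)/2 - 1))) v := by
    funext v
    by_cases hv : v ∈ Ioi (0:ℝ)
    · rw [ggDens, indicator_of_mem hv, indicator_of_mem hv, Real.rpow_def_of_pos hv]
    · rw [ggDens, indicator_of_notMem hv, indicator_of_notMem hv]
  rw [hEq]
  exact (((Real.measurable_log.mul_const _).exp).const_mul _).indicator measurableSet_Ioi

lemma sq_cdf (m : ℕ) (hm : 0 < m) (t : ℝ) :
    volume ((fun x : EuclideanSpace ℝ (Fin m) => ‖x‖ ^ 2) ⁻¹' Iic t)
      = ENNReal.ofReal (ggCdf m t) := by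
  haveI : Nonempty (Fin m) := ⟨⟨0, hm⟩⟩
  rcases le_or_gt 0 t with ht | ht
  · have hset : (fun x : EuclideanSpace ℝ (Fin m) => ‖x‖ ^ 2) ⁻¹' Iic t
        = Metric.closedBall (0 : EuclideanSpace ℝ (Fin m)) (Real.sqrt t) := by
      ext x
      simp only [mem_preimage, mem_Iic, Metric.mem_closedBall, dist_zero_right]
      exact (Real.le_sqrt (norm_nonneg x) ht).symm
    have sqpow : ∀ u : ℝ, 0 ≤ u → Real.sqrt u ^ m = u ^ ((m : ℝ) / 2) := by
      intro u hu
      rw [Real.sqrt_eq_rpow, ← Real.rpow_natCast (u ^ ((1:ℝ)/2)) m, ← Real.rpow_mul hu]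
      congr 1
      ring
    rw [hset, EuclideanSpace.volume_closedBall, Fintype.card_fin,
      ← ENNReal.ofReal_pow (Real.sqrt_nonneg t),
      ← ENNReal.ofReal_mul (by positivity)]
    unfold ggCdf
    rw [max_eq_left ht, sqpow t ht, sqpow Real.pi Real.pi_pos.le]
  · have hset : (fun x : EuclideanSpace ℝ (Fin m) => ‖x‖ ^ 2) ⁻¹' Iic t = (∅ : Set _) := by
      ext x
      simp only [mem_preimage, mem_Iic, mem_empty_iff_false, iff_false, not_le]
      exact lt_of_lt_of_le ht (by positivity)
    rw [hset, measure_empty]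
    unfold ggCdf
    rw [max_eq_right ht.le, Real.zero_rpow (by positivity), zero_mul, ENNReal.ofReal_zero]

lemma ggDens_Ioc (m : ℕ) (hm : 0 < m) {a b : ℝ} (hab : a ≤ b) :
    (volume.withDensity fun v => ENNReal.ofReal (ggDens m v)) (Ioc a b)
      = ENNReal.ofReal (ggCdf m b - ggCdf m a) := by
  set e : ℝ := (m:ℝ)/2 - 1 with he_def
  set c : ℝ := Real.pi ^ ((m:ℝ)/2) / Real.Gamma ((m:ℝ)/2) with hc_def
  have hm2 : (0:ℝ) < (m:ℝ)/2 := by positivity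
  have he : (-1:ℝ) < e := by rw [he_def]; linarith
  have hΓpos : 0 < Real.Gamma ((m:ℝ)/2) := Real.Gamma_pos_of_pos hm2
  have hc : 0 ≤ c := div_nonneg (Real.rpow_nonneg Real.pi_pos.le _) hΓpos.le
  have hofReal : ∀ v : ℝ, ENNReal.ofReal (ggDens m v)
      = (Ioi (0:ℝ)).indicator (fun v => ENNReal.ofReal (c * v ^ e)) v := by
    intro v; by_cases hv : v ∈ Ioi (0:ℝ)
    · rw [ggDens, indicator_of_mem hv, indicator_of_mem hv]
    · rw [ggDens, indicator_of_notMem hv, indicator_of_notMem hv, ENNReal.ofReal_zero]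
  rw [withDensity_apply _ measurableSet_Ioc]
  simp_rw [hofReal]
  rw [setLIntegral_indicator measurableSet_Ioi]
  have hinter : Ioi (0:ℝ) ∩ Ioc a b = Ioc (max a 0) b := by
    ext v
    simp only [mem_inter_iff, mem_Ioi, mem_Ioc, max_lt_iff]
    tauto
  rw [hinter]
  rcases le_or_gt b 0 with hb | hb
  · rw [Ioc_eq_empty (not_lt.2 (hb.trans (le_max_right a 0))), Measure.restrict_empty,
      lintegral_zero_measure]
    have hz : ggCdf m b - ggCdf m a = 0 := by
      unfold ggCdf
      rw [max_eq_right hb, max_eq_right (hab.trans hb)]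
      ring
    rw [hz, ENNReal.ofReal_zero]
  · set a' := max a 0 with ha'_def
    have ha' : (0:ℝ) ≤ a' := le_max_right _ _
    have ha'b : a' ≤ b := max_le hab hb.le
    have hint : IntervalIntegrable (fun v : ℝ => c * v ^ e) volume a' b :=
      (intervalIntegral.intervalIntegrable_rpow' he).const_mul c
    have hIntOn : IntegrableOn (fun v : ℝ => c * v ^ e) (Ioc a' b) volume :=
      (intervalIntegrable_iff_integrableOn_Ioc_of_le ha'b).mp hint
    have hnn : 0 ≤ᵐ[volume.restrict (Ioc a' b)] fun v : ℝ => c * v ^ e := by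
      filter_upwards [ae_restrict_mem measurableSet_Ioc] with v hv
      exact mul_nonneg hc (Real.rpow_nonneg (le_of_lt (lt_of_le_of_lt ha' hv.1)) _)
    rw [← ofReal_integral_eq_lintegral_ofReal hIntOn hnn,
      ← intervalIntegral.integral_of_le ha'b,
      intervalIntegral.integral_const_mul, integral_rpow (Or.inl he)]
    congr 1
    have hΓ : Real.Gamma ((m:ℝ)/2 + 1) = (m:ℝ)/2 * Real.Gamma ((m:ℝ)/2) :=
      Real.Gamma_add_one hm2.ne'
    have he1 : e + 1 = (m:ℝ)/2 := by rw [he_def]; ring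
    unfold ggCdf
    rw [max_eq_left hb.le, ← ha'_def, he1, hΓ, hc_def]
    field_simp

lemma map_sq_Ioc (m : ℕ) (hm : 0 < m) {a b : ℝ} (hab : a ≤ b) :
    Measure.map (fun x : EuclideanSpace ℝ (Fin m) => ‖x‖ ^ 2) volume (Ioc a b)
      = ENNReal.ofReal (ggCdf m b - ggCdf m a) := by
  have hsq : Measurable fun x : EuclideanSpace ℝ (Fin m) => ‖x‖ ^ 2 :=
    measurable_norm.pow_const 2
  rw [Measure.map_apply hsq measurableSet_Ioc]
  have hpre : (fun x : EuclideanSpace ℝ (Fin m) => ‖x‖ ^ 2) ⁻¹' Ioc a b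
      = ((fun x : EuclideanSpace ℝ (Fin m) => ‖x‖ ^ 2) ⁻¹' Iic b)
        \ ((fun x : EuclideanSpace ℝ (Fin m) => ‖x‖ ^ 2) ⁻¹' Iic a) := by
    rw [← preimage_diff, Iic_sdiff_Iic]
  rw [hpre, measure_diff (preimage_mono (Iic_subset_Iic.2 hab))
      ((hsq measurableSet_Iic).nullMeasurableSet)
      (by rw [sq_cdf m hm]; exact ENNReal.ofReal_ne_top),
    sq_cdf m hm, sq_cdf m hm, ← ENNReal.ofReal_sub _ (ggCdf_nonneg m a)]

lemma map_sq_volume (m : ℕ) (hm : 0 < m) :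
    Measure.map (fun x : EuclideanSpace ℝ (Fin m) => ‖x‖ ^ 2) volume
      = volume.withDensity fun v => ENNReal.ofReal (ggDens m v) := by
  refine Measure.ext_of_Ioc' _ _ (fun a b hab => ?_) (fun a b hab => ?_)
  · rw [map_sq_Ioc m hm hab.le]; exact ENNReal.ofReal_ne_top
  · rw [map_sq_Ioc m hm hab.le, ggDens_Ioc m hm hab.le]

lemma lintegral_pi_prod {m : ℕ} (f : Fin m → ℝ → ℝ≥0∞) (hf : ∀ i, Measurable (f i)) :
    ∫⁻ x : Fin m → ℝ, ∏ i, f i (x i) ∂(Measure.pi fun _ => (volume : Measure ℝ))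
      = ∏ i, ∫⁻ y, f i y := by
  induction m with
  | zero => simp
  | succ m ih =>
      have A := (measurePreserving_piFinSuccAbove (fun _ : Fin (m+1) => (volume : Measure ℝ)) 0).symm
      have hFm : Measurable fun x : Fin (m+1) → ℝ => ∏ i, f i (x i) :=
        Finset.measurable_prod _ fun i _ => (hf i).comp (measurable_pi_apply i)
      rw [← A.map_eq,
        lintegral_map hFm (MeasurableEquiv.piFinSuccAbove (fun _ => ℝ) 0).symm.measurable]
      simp_rw [MeasurableEquiv.piFinSuccAbove_symm_apply, Fin.insertNthEquiv,
        Fin.prod_univ_succ, Fin.insertNth_zero]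
      simp only [Fin.zero_succAbove, Fin.cons_zero, Fin.cons_succ, Equiv.coe_fn_mk, cast_eq]
      have hg : Measurable fun y : Fin m → ℝ => ∏ i, f i.succ (y i) :=
        Finset.measurable_prod _ fun i _ => (hf i.succ).comp (measurable_pi_apply i)
      rw [lintegral_prod_mul (hf 0).aemeasurable hg.aemeasurable,
        ih (fun i => f i.succ) (fun i => hf i.succ)]

lemma pi_withDensity (m : ℕ) (f : Fin m → ℝ → ℝ≥0∞) (hf : ∀ i, Measurable (f i))
    [∀ i : Fin m, SigmaFinite ((volume : Measure ℝ).withDensity (f i))] :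
    Measure.pi (fun i => (volume : Measure ℝ).withDensity (f i))
      = (volume : Measure (Fin m → ℝ)).withDensity fun v => ∏ i, f i (v i) := by
  refine Measure.pi_eq fun s hs => ?_
  have hind : ∀ v : Fin m → ℝ, (univ.pi s).indicator (fun v => ∏ i, f i (v i)) v
      = ∏ i, (s i).indicator (f i) (v i) := by
    intro v
    by_cases hv : v ∈ univ.pi s
    · rw [indicator_of_mem hv]
      exact Finset.prod_congr rfl fun i _ =>
        (indicator_of_mem (hv i (Set.mem_univ i)) _).symm
    · rw [indicator_of_notMem hv]
      rw [Set.mem_univ_pi] at hv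
      push_neg at hv
      obtain ⟨i, hi⟩ := hv
      exact (Finset.prod_eq_zero (Finset.mem_univ i) (indicator_of_notMem hi _)).symm
  rw [withDensity_apply _ (MeasurableSet.univ_pi hs),
    ← lintegral_indicator (MeasurableSet.univ_pi hs)]
  simp_rw [hind]
  rw [volume_pi, lintegral_pi_prod _ (fun i => (hf i).indicator (hs i))]
  exact Finset.prod_congr rfl fun i _ => by
    rw [lintegral_indicator (hs i), withDensity_apply _ (hs i)]

lemma map_withDensity_comp {α β : Type*} [MeasurableSpace α] [MeasurableSpace β]
    (μ : Measure α) {T : α → β} (hT : Measurable T) {f : β → ℝ≥0∞} (hf : Measurable f) :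
    Measure.map T (μ.withDensity fun x => f (T x)) = (Measure.map T μ).withDensity f := by
  ext s hs
  rw [Measure.map_apply hT hs, withDensity_apply _ hs, setLIntegral_map hs hf hT,
    withDensity_apply _ (hT hs)]
lemma map_normsq_pi (k : ℕ) (n : Fin (k + 1) → ℕ) (hn : ∀ i, 0 < n i) :
    Measure.map (fun x : Π i, EuclideanSpace ℝ (Fin (n i)) => fun i => ‖x i‖ ^ 2) volume
      = (volume : Measure (Fin (k + 1) → ℝ)).withDensity
          fun v => ∏ i, ENNReal.ofReal (ggDens (n i) (v i)) := by
  have hT : Measurable (fun x : Π i, EuclideanSpace ℝ (Fin (n i)) => fun i => ‖x i‖ ^ 2) :=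
    measurable_pi_lambda _ fun i => (measurable_norm.pow_const 2).comp (measurable_pi_apply i)
  have hpi : Measure.pi (fun i : Fin (k+1) =>
      (volume : Measure ℝ).withDensity fun v => ENNReal.ofReal (ggDens (n i) v))
      = (volume : Measure (Fin (k + 1) → ℝ)).withDensity
          fun v => ∏ i, ENNReal.ofReal (ggDens (n i) (v i)) :=
    pi_withDensity (k+1) (fun i v => ENNReal.ofReal (ggDens (n i) v))
      (fun i => (measurable_ggDens (n i)).ennreal_ofReal)
  rw [← hpi]
  refine (Measure.pi_eq fun s hs => ?_).symm
  rw [Measure.map_apply hT (MeasurableSet.univ_pi hs)]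
  have hpre : (fun x : Π i, EuclideanSpace ℝ (Fin (n i)) => fun i => ‖x i‖ ^ 2) ⁻¹' univ.pi s
      = univ.pi fun i => (fun y : EuclideanSpace ℝ (Fin (n i)) => ‖y‖ ^ 2) ⁻¹' s i := by
    ext x
    simp [Set.mem_univ_pi]
  rw [hpre, volume_pi, Measure.pi_pi]
  refine Finset.prod_congr rfl fun i _ => ?_
  rw [← map_sq_volume (n i) (hn i),
    Measure.map_apply (measurable_norm.pow_const 2) (hs i)]

theorem multivariate_generalised_gamma_density (k : ℕ) (n : Fin (k + 1) → ℕ)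
    (hn : ∀ i, 0 < n i) (h : ℝ → ℝ) (hmeas : Measurable h) (hnonneg : ∀ u, 0 ≤ h u)
    (hnorm : ∫ x : Π i, EuclideanSpace ℝ (Fin (n i)), h (∑ i, ‖x i‖ ^ 2) = 1) :
    Measure.map (fun x : Π i, EuclideanSpace ℝ (Fin (n i)) => fun i => ‖x i‖ ^ 2)
      (volume.withDensity fun x => ENNReal.ofReal (h (∑ i, ‖x i‖ ^ 2))) =
    volume.withDensity fun v : Fin (k + 1) → ℝ => ENNReal.ofReal
      (Set.indicator {v : Fin (k + 1) → ℝ | ∀ i, 0 < v i}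
        (fun v => Real.pi ^ ((∑ i, (n i : ℝ)) / 2) / (∏ i, Real.Gamma ((n i : ℝ) / 2)) *
          h (∑ i, v i) * ∏ i, v i ^ ((n i : ℝ) / 2 - 1)) v) := by
  have hT : Measurable (fun x : Π i, EuclideanSpace ℝ (Fin (n i)) => fun i => ‖x i‖ ^ 2) :=
    measurable_pi_lambda _ fun i => (measurable_norm.pow_const 2).comp (measurable_pi_apply i)
  have hfmeas : Measurable fun v : Fin (k+1) → ℝ => ENNReal.ofReal (h (∑ i, v i)) :=
    (hmeas.comp (Finset.measurable_sum _ fun i _ => measurable_pi_apply i)).ennreal_ofReal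
  have hGmeas : Measurable fun v : Fin (k+1) → ℝ => ∏ i, ENNReal.ofReal (ggDens (n i) (v i)) :=
    Finset.measurable_prod _ fun i _ =>
      ((measurable_ggDens (n i)).comp (measurable_pi_apply i)).ennreal_ofReal
  have hdens : (fun x : Π i, EuclideanSpace ℝ (Fin (n i)) => ENNReal.ofReal (h (∑ i, ‖x i‖ ^ 2)))
      = fun x => (fun v : Fin (k+1) → ℝ => ENNReal.ofReal (h (∑ i, v i)))
          ((fun x : Π i, EuclideanSpace ℝ (Fin (n i)) => fun i => ‖x i‖ ^ 2) x) := rfl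
  rw [hdens, map_withDensity_comp volume hT hfmeas, map_normsq_pi k n hn,
    ← withDensity_mul _ hGmeas hfmeas]
  congr 1
  funext v
  simp only [Pi.mul_apply]
  by_cases hv : v ∈ {v : Fin (k + 1) → ℝ | ∀ i, 0 < v i}
  · have hvi : ∀ i, 0 < v i := hv
    rw [indicator_of_mem hv]
    have h1 : ∀ i : Fin (k+1), ggDens (n i) (v i)
        = Real.pi ^ ((n i : ℝ)/2) / Real.Gamma ((n i : ℝ)/2) * (v i) ^ ((n i : ℝ)/2 - 1) :=
      fun i => indicator_of_mem (hvi i) _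
    have hnn : ∀ i : Fin (k+1),
        0 ≤ Real.pi ^ ((n i : ℝ)/2) / Real.Gamma ((n i : ℝ)/2) * (v i) ^ ((n i : ℝ)/2 - 1) :=
      fun i => mul_nonneg
        (div_nonneg (Real.rpow_nonneg Real.pi_pos.le _)
          (Real.Gamma_pos_of_pos (div_pos (Nat.cast_pos.2 (hn i)) two_pos)).le)
        (Real.rpow_nonneg (hvi i).le _)
    simp_rw [h1]
    rw [← ENNReal.ofReal_prod_of_nonneg (fun i _ => hnn i),
      ← ENNReal.ofReal_mul (Finset.prod_nonneg fun i _ => hnn i)]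
    congr 1
    rw [Finset.prod_mul_distrib, Finset.prod_div_distrib]
    have hpi : Real.pi ^ ((∑ i, (n i : ℝ))/2) = ∏ i, Real.pi ^ ((n i : ℝ)/2) := by
      rw [Finset.sum_div, Real.rpow_sum_of_pos Real.pi_pos]
    rw [hpi]
    ring
  · rw [indicator_of_notMem hv, ENNReal.ofReal_zero]
    simp only [mem_setOf_eq] at hv
    push_neg at hv
    obtain ⟨i, hi⟩ := hv
    have hzero : ENNReal.ofReal (ggDens (n i) (v i)) = 0 := by
      rw [ggDens, indicator_of_notMem (by simpa using not_lt.mpr hi), ENNReal.ofReal_zero]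
    rw [Finset.prod_eq_zero (Finset.mem_univ i) hzero, zero_mul]
end

section
/- Suppose X = (X₀, X₁, …, X_k) with X_i ∈ R^{n_i} has joint density h(∑_{i=0}^k ‖x_i‖²) on R^N, N = n₀ + ⋯ + n_k. Define V = ‖X₀‖² and T_i = V^{-1/2} X_i, i = 1, …, k. Then (V, T₁, …, T_k) has joint density (π^{n₀/2}/Γ(n₀/2)) · h(v (1 + ∑_{i=1}^k ‖t_i‖²)) · v^{N/2 - 1} on (0,∞) × R^{n₁} × ⋯ × R^{n_k}. -/
/-!
Integrate out `y = (x₁, …, x_k)` first. For fixed `x₀ ≠ 0` the substitution `y = ‖x₀‖ t` turns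
`h(‖x₀‖² + Q y)`, where `Q y = ∑ ‖yᵢ‖²`, into `‖x₀‖^m h(‖x₀‖² (1 + Q t))` with
`m = n₁ + ⋯ + n_k`: a function of `v = ‖x₀‖²` alone. Polar coordinates in `x₀` followed by
`r = √v` give `∫ f(‖x₀‖²) dx₀ = ∫₀^∞ π^{n₀/2}/Γ(n₀/2) v^{n₀/2-1} f(v) dv`, and the two powers
of `v` combine to `v^{N/2-1}`.
-/

open MeasureTheory Real Set Module
open scoped ENNReal

theorem lintegral_fun_norm_addHaar {E : Type*} [NormedAddCommGroup E] [NormedSpace ℝ E]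
    [FiniteDimensional ℝ E] [MeasurableSpace E] [BorelSpace E] [Nontrivial E] (μ : Measure E)
    [μ.IsAddHaarMeasure] {f : ℝ → ℝ≥0∞} (hf : Measurable f) :
    ∫⁻ x, f ‖x‖ ∂μ =
      finrank ℝ E * μ (Metric.ball 0 1) *
        ∫⁻ r in Ioi 0, ENNReal.ofReal (r ^ (finrank ℝ E - 1)) * f r :=
  calc ∫⁻ x, f ‖x‖ ∂μ = ∫⁻ x : ({0}ᶜ : Set E), f ‖x.1‖ ∂μ.comap (↑) := by
        rw [lintegral_subtype_comap (measurableSet_singleton _).compl fun x => f ‖x‖,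
          restrict_compl_singleton]
    _ = ∫⁻ x, f x.2 ∂μ.toSphere.prod (.volumeIoiPow (finrank ℝ E - 1)) := by
        rw [← μ.measurePreserving_homeomorphUnitSphereProd.map_eq,
          lintegral_map (by fun_prop) (homeomorphUnitSphereProd E).measurable]
        simp
    _ = μ.toSphere univ * ∫⁻ r : Ioi (0 : ℝ), f r ∂.volumeIoiPow (finrank ℝ E - 1) := by
        rw [lintegral_prod _ (by fun_prop)]
        simp [mul_comm]
    _ = _ := by
        rw [μ.toSphere_apply_univ, Measure.volumeIoiPow,
          lintegral_withDensity_eq_lintegral_mul _ (by fun_prop) (by fun_prop)]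
        exact congrArg _ (lintegral_subtype_comap measurableSet_Ioi
          fun r => ENNReal.ofReal (r ^ (finrank ℝ E - 1)) * f r)

theorem setLIntegral_Ioi_eq_comp_sq (g : ℝ → ℝ≥0∞) :
    ∫⁻ v in Ioi 0, g v = ∫⁻ r in Ioi 0, ENNReal.ofReal (2 * r) * g (r ^ 2) := by
  have himage : (fun r : ℝ => r ^ 2) '' Ioi 0 = Ioi 0 := by
    ext v
    refine ⟨?_, fun hv => ⟨√v, sqrt_pos.2 hv, sq_sqrt (le_of_lt hv)⟩⟩
    rintro ⟨r, hr, rfl⟩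
    exact pow_pos (mem_Ioi.1 hr) 2
  conv_lhs => rw [← himage]
  refine lintegral_image_eq_lintegral_deriv_mul_of_monotoneOn measurableSet_Ioi (fun r _ => ?_)
    ((pow_left_strictMonoOn₀ two_ne_zero).monotoneOn.mono fun r (hr : 0 < r) => hr.le) g
  simpa [mul_comm] using (hasDerivAt_pow 2 r).hasDerivWithinAt

theorem lintegral_comp_smul_of_pos {F : Type*} [NormedAddCommGroup F] [NormedSpace ℝ F]
    [FiniteDimensional ℝ F] [MeasurableSpace F] [BorelSpace F] (μ : Measure F)
    [μ.IsAddHaarMeasure] (f : F → ℝ≥0∞) {R : ℝ} (hR : 0 < R) :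
    ∫⁻ x, f (R • x) ∂μ = ENNReal.ofReal ((R ^ finrank ℝ F)⁻¹) * ∫⁻ x, f x ∂μ := by
  calc ∫⁻ x, f (R • x) ∂μ = ∫⁻ x, f x ∂μ.map (R • ·) :=
        (lintegral_map_equiv f (MeasurableEquiv.smul₀ R hR.ne')).symm
    _ = _ := by
        rw [μ.map_addHaar_smul hR.ne', lintegral_smul_measure, smul_eq_mul,
          abs_of_pos (by positivity)]

theorem InnerProductSpace.lintegral_fun_norm_sq {E : Type*} [NormedAddCommGroup E]
    [InnerProductSpace ℝ E] [FiniteDimensional ℝ E] [MeasurableSpace E] [BorelSpace E]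
    [Nontrivial E] {f : ℝ → ℝ≥0∞} (hf : Measurable f) :
    ∫⁻ x : E, f (‖x‖ ^ 2) =
      ∫⁻ v in Ioi 0,
        ENNReal.ofReal (π ^ ((finrank ℝ E : ℝ) / 2) / Gamma ((finrank ℝ E : ℝ) / 2) *
          v ^ ((finrank ℝ E : ℝ) / 2 - 1)) * f v := by
  set d := finrank ℝ E
  have hd : 0 < d := finrank_pos
  -- `d` times the volume of the unit ball is the area `2 π^{d/2} / Γ(d/2)` of the unit sphere
  have hconst :
      (d * (√π ^ d / Gamma (d / 2 + 1)) : ℝ) = 2 * (π ^ ((d : ℝ) / 2) / Gamma (d / 2)) := by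
    rw [Gamma_add_one (by positivity), sqrt_eq_rpow, ← rpow_natCast, ← rpow_mul pi_pos.le]
    field_simp
  have hpow : ∀ r : ℝ, 0 < r → r ^ (d - 1) = r * (r ^ 2) ^ ((d : ℝ) / 2 - 1) := by
    intro r hr
    rw [← rpow_natCast, ← rpow_natCast, ← rpow_mul hr.le, mul_comm r, ← rpow_add_one hr.ne']
    push_cast [Nat.cast_sub hd]
    ring_nf
  rw [lintegral_fun_norm_addHaar volume (f := fun r => f (r ^ 2)) (by fun_prop),
    InnerProductSpace.volume_ball, setLIntegral_Ioi_eq_comp_sq (fun v => ENNReal.ofReal _ * f v),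
    ← lintegral_const_mul' _ _ (by finiteness)]
  refine setLIntegral_congr_fun measurableSet_Ioi fun r (hr : 0 < r) => ?_
  simp only [ENNReal.ofReal_one, one_pow, one_mul, ← mul_assoc]
  congr 1
  rw [← ENNReal.ofReal_natCast, ← ENNReal.ofReal_mul (by positivity),
    ← ENNReal.ofReal_mul (by positivity), ← ENNReal.ofReal_mul (by positivity), hconst,
    hpow r hr]
  ring_nf

section Rescaling

variable {E F : Type*} [NormedAddCommGroup E] [InnerProductSpace ℝ E] [FiniteDimensional ℝ E]
  [MeasurableSpace E] [BorelSpace E] [NormedAddCommGroup F] [NormedSpace ℝ F]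
  [FiniteDimensional ℝ F] [MeasureSpace F] [BorelSpace F] [(volume : Measure F).IsAddHaarMeasure]
  {Q : F → ℝ} {h : ℝ → ℝ}

theorem lintegral_rescale_fiber (hQ : ∀ r : ℝ, 0 < r → ∀ t, Q (r • t) = r ^ 2 * Q t)
    (g : F → ℝ≥0∞) {v : ℝ} (hv : 0 < v) :
    ∫⁻ y, ENNReal.ofReal (h (v + Q y)) * g (v ^ (-(1 / 2 : ℝ)) • y) =
      ENNReal.ofReal (v ^ ((finrank ℝ F : ℝ) / 2)) *
        ∫⁻ t, ENNReal.ofReal (h (v * (1 + Q t))) * g t := by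
  have hR : 0 < v ^ (-(1 / 2 : ℝ)) := rpow_pos_of_pos hv _
  have hQy : ∀ y, v + Q y = v * (1 + Q (v ^ (-(1 / 2 : ℝ)) • y)) := fun y => by
    rw [hQ _ hR, ← rpow_natCast, ← rpow_mul hv.le]
    norm_num [rpow_neg_one]
    field_simp
  simp_rw [hQy]
  rw [lintegral_comp_smul_of_pos volume (fun t => ENNReal.ofReal (h (v * (1 + Q t))) * g t) hR,
    ← rpow_natCast, ← rpow_mul hv.le, ← rpow_neg hv.le]
  congr 3
  ring

theorem map_withDensity_sq_norm_rescale [Nontrivial E] (hh : Measurable h) (hQm : Measurable Q)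
    (hQ : ∀ r : ℝ, 0 < r → ∀ t, Q (r • t) = r ^ 2 * Q t) :
    Measure.map (fun x : E × F => (‖x.1‖ ^ 2, (‖x.1‖ ^ 2) ^ (-(1 / 2 : ℝ)) • x.2))
      (volume.withDensity fun x => ENNReal.ofReal (h (‖x.1‖ ^ 2 + Q x.2))) =
    volume.withDensity fun p : ℝ × F => ENNReal.ofReal
      ((Ioi 0).indicator
        (fun v => π ^ ((finrank ℝ E : ℝ) / 2) / Gamma ((finrank ℝ E : ℝ) / 2) *
          h (v * (1 + Q p.2)) * v ^ (((finrank ℝ E : ℝ) + finrank ℝ F) / 2 - 1)) p.1) := by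
  set c := π ^ ((finrank ℝ E : ℝ) / 2) / Gamma ((finrank ℝ E : ℝ) / 2)
  set e := ((finrank ℝ E : ℝ) + finrank ℝ F) / 2 - 1 with he
  have hc : 0 ≤ c := by positivity
  have hdens : Measurable fun p : ℝ × F =>
      ENNReal.ofReal ((Ioi 0).indicator (fun v => c * h (v * (1 + Q p.2)) * v ^ e) p.1) := by
    simp only [indicator_apply]
    exact (Measurable.ite (measurable_fst measurableSet_Ioi) (by fun_prop)
      measurable_const).ennreal_ofReal
  refine Measure.ext_of_lintegral _ fun g hg => ?_
  rw [lintegral_map hg (by fun_prop),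
    lintegral_withDensity_eq_lintegral_mul _ (by fun_prop) (by fun_prop),
    lintegral_withDensity_eq_lintegral_mul _ hdens hg]
  set Φ : ℝ → ℝ≥0∞ := fun v => ∫⁻ y, ENNReal.ofReal (h (v + Q y)) * g (v, v ^ (-(1 / 2 : ℝ)) • y)
  set Ψ : ℝ → ℝ≥0∞ := fun v => ∫⁻ t, ENNReal.ofReal (h (v * (1 + Q t))) * g (v, t)
  have hΦ : Measurable Φ := Measurable.lintegral_prod_right'
    (f := fun p : ℝ × F => ENNReal.ofReal (h (p.1 + Q p.2)) * g (p.1, p.1 ^ (-(1 / 2 : ℝ)) • p.2))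
    (by fun_prop)
  calc ∫⁻ x : E × F, ENNReal.ofReal (h (‖x.1‖ ^ 2 + Q x.2)) *
        g (‖x.1‖ ^ 2, (‖x.1‖ ^ 2) ^ (-(1 / 2 : ℝ)) • x.2)
      = ∫⁻ x₀ : E, Φ (‖x₀‖ ^ 2) := by
        rw [Measure.volume_eq_prod, lintegral_prod _ (by fun_prop)]
    _ = ∫⁻ v in Ioi 0, ENNReal.ofReal (c * v ^ ((finrank ℝ E : ℝ) / 2 - 1)) * Φ v :=
        InnerProductSpace.lintegral_fun_norm_sq hΦ
    _ = ∫⁻ v in Ioi 0, ENNReal.ofReal (c * v ^ e) * Ψ v := by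
        refine setLIntegral_congr_fun measurableSet_Ioi fun v (hv : 0 < v) => ?_
        have hfiber : Φ v = ENNReal.ofReal (v ^ ((finrank ℝ F : ℝ) / 2)) * Ψ v :=
          lintegral_rescale_fiber hQ (fun t => g (v, t)) hv
        rw [hfiber, ← mul_assoc,
          ← ENNReal.ofReal_mul (by positivity), mul_assoc, ← rpow_add hv, he]
        congr 4
        ring
    _ = ∫⁻ p : ℝ × F, ENNReal.ofReal
          ((Ioi 0).indicator (fun v => c * h (v * (1 + Q p.2)) * v ^ e) p.1) * g p := by
        rw [Measure.volume_eq_prod, lintegral_prod _ (hdens.fun_mul hg).aemeasurable,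
          ← lintegral_indicator measurableSet_Ioi]
        refine lintegral_congr fun v => ?_
        by_cases hv : v ∈ Ioi 0
        · simp only [indicator_of_mem hv, Ψ]
          rw [← lintegral_const_mul' _ _ ENNReal.ofReal_ne_top]
          refine lintegral_congr fun t => ?_
          rw [← mul_assoc, ← ENNReal.ofReal_mul (mul_nonneg hc (rpow_nonneg (le_of_lt hv) _)),
            mul_right_comm]
        · simp [indicator_of_notMem hv]

end Rescaling

theorem generalised_gamma_pearson_VII_joint_density_general (k n₀ : ℕ) (hn₀ : 0 < n₀)
    (n : Fin k → ℕ) (h : ℝ → ℝ) (hmeas : Measurable h) :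
    Measure.map
      (fun x : EuclideanSpace ℝ (Fin n₀) × Π i, EuclideanSpace ℝ (Fin (n i)) =>
        ((‖x.1‖ ^ 2 : ℝ), fun i => ((‖x.1‖ ^ 2) ^ (-(1/2 : ℝ))) • x.2 i))
      (volume.withDensity fun x => ENNReal.ofReal (h (‖x.1‖ ^ 2 + ∑ i, ‖x.2 i‖ ^ 2))) =
    volume.withDensity fun p : ℝ × Π i, EuclideanSpace ℝ (Fin (n i)) => ENNReal.ofReal
      (Set.indicator (Ioi (0 : ℝ))
        (fun v => Real.pi ^ ((n₀ : ℝ) / 2) / Real.Gamma ((n₀ : ℝ) / 2) *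
          h (v * (1 + ∑ i, ‖p.2 i‖ ^ 2)) *
          v ^ (((n₀ : ℝ) + ∑ i, (n i : ℝ)) / 2 - 1)) p.1) := by
  have : Nonempty (Fin n₀) := Fin.pos_iff_nonempty.mp hn₀
  have hQ : ∀ r : ℝ, 0 < r → ∀ t : Π i, EuclideanSpace ℝ (Fin (n i)),
      ∑ i, ‖(r • t) i‖ ^ 2 = r ^ 2 * ∑ i, ‖t i‖ ^ 2 := fun r hr t => by
    simp [norm_smul, mul_pow, Finset.mul_sum, abs_of_pos hr]
  have key := map_withDensity_sq_norm_rescale (E := EuclideanSpace ℝ (Fin n₀)) hmeas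
    (Q := fun t : Π i, EuclideanSpace ℝ (Fin (n i)) => ∑ i, ‖t i‖ ^ 2) (by fun_prop) hQ
  simp only [finrank_euclideanSpace_fin, finrank_pi_fintype, Nat.cast_sum] at key
  exact key

theorem generalised_gamma_pearson_VII_joint_density (k n₀ : ℕ) (hn₀ : 0 < n₀)
    (n : Fin k → ℕ) (hn : ∀ i, 0 < n i) (h : ℝ → ℝ) (hmeas : Measurable h)
    (hnonneg : ∀ u, 0 ≤ h u)
    (hnorm : ∫ x : EuclideanSpace ℝ (Fin n₀) × Π i, EuclideanSpace ℝ (Fin (n i)),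
        h (‖x.1‖ ^ 2 + ∑ i, ‖x.2 i‖ ^ 2) = 1) :
    Measure.map
      (fun x : EuclideanSpace ℝ (Fin n₀) × Π i, EuclideanSpace ℝ (Fin (n i)) =>
        ((‖x.1‖ ^ 2 : ℝ), fun i => ((‖x.1‖ ^ 2) ^ (-(1/2 : ℝ))) • x.2 i))
      (volume.withDensity fun x => ENNReal.ofReal (h (‖x.1‖ ^ 2 + ∑ i, ‖x.2 i‖ ^ 2))) =
    volume.withDensity fun p : ℝ × Π i, EuclideanSpace ℝ (Fin (n i)) => ENNReal.ofReal
      (Set.indicator (Ioi (0 : ℝ))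
        (fun v => Real.pi ^ ((n₀ : ℝ) / 2) / Real.Gamma ((n₀ : ℝ) / 2) *
          h (v * (1 + ∑ i, ‖p.2 i‖ ^ 2)) *
          v ^ (((n₀ : ℝ) + ∑ i, (n i : ℝ)) / 2 - 1)) p.1) :=
  generalised_gamma_pearson_VII_joint_density_general k n₀ hn₀ n h hmeas
end

section
/- Fix positive reals a₀, a₁, a₂ and set A = a₀ + a₁ + a₂. Then ∫₀^∞ ∫₀^1 f^{a₁-1} b^{a₂-1} (1 + (1-b) f)^{-A} (1-b)^{a₀+a₁-1} db df = Γ(a₀)Γ(a₁)Γ(a₂)/Γ(A). -/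
/-!
Integrate in `f` first; this is legitimate because the integrand is nonnegative and the resulting
iterated integral is finite. For fixed `b` the `f`-integral is a beta-prime integral: scaling `f`
by `1 - b` and substituting `t = x / (1 - x)` turns it into `(1 - b) ^ (-a₁) * B(a₁, a₂ + a₀)`.
The factor `(1 - b) ^ (-a₁)` cancels against `(1 - b) ^ (a₀ + a₁ - 1)`, leaving the beta kernel
`b ^ (a₂ - 1) * (1 - b) ^ (a₀ - 1)`, which integrates to `B(a₂, a₀)`, and
`B(a₁, a₂ + a₀) * B(a₂, a₀) = Γ(a₀) Γ(a₁) Γ(a₂) / Γ(a₀ + a₁ + a₂)`.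
-/

open MeasureTheory Real Set
open ProbabilityTheory (beta beta_eq_betaIntegralReal)

section Beta

variable {u v : ℝ}

lemma ofReal_rpow_mul_one_sub_rpow {x : ℝ} (hx : x ∈ Ioo (0 : ℝ) 1) :
    ((x ^ (u - 1) * (1 - x) ^ (v - 1) : ℝ) : ℂ) =
      (x : ℂ) ^ ((u : ℂ) - 1) * (1 - (x : ℂ)) ^ ((v : ℂ) - 1) := by
  rw [Complex.ofReal_mul, Complex.ofReal_cpow hx.1.le, Complex.ofReal_cpow (sub_nonneg.2 hx.2.le)]
  push_cast
  rfl

lemma betaIntegral_ofReal_eq_integral_Ioo :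
    Complex.betaIntegral u v =
      ∫ x in Ioo (0 : ℝ) 1, ((x ^ (u - 1) * (1 - x) ^ (v - 1) : ℝ) : ℂ) := by
  rw [Complex.betaIntegral, intervalIntegral.integral_of_le zero_le_one,
    integral_Ioc_eq_integral_Ioo]
  exact setIntegral_congr_fun measurableSet_Ioo fun x hx => (ofReal_rpow_mul_one_sub_rpow hx).symm

theorem integrableOn_rpow_mul_one_sub_rpow (hu : 0 < u) (hv : 0 < v) :
    IntegrableOn (fun x => x ^ (u - 1) * (1 - x) ^ (v - 1)) (Ioo (0 : ℝ) 1) := by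
  have h := (Complex.betaIntegral_convergent (u := u) (v := v) (by simpa) (by simpa)).1
  have h' := (h.mono_set Ioo_subset_Ioc_self).congr_fun
    (fun x hx => (ofReal_rpow_mul_one_sub_rpow (u := u) (v := v) hx).symm) measurableSet_Ioo
  simpa [IntegrableOn] using h'.re

theorem integral_rpow_mul_one_sub_rpow (hu : 0 < u) (hv : 0 < v) :
    ∫ x in Ioo (0 : ℝ) 1, x ^ (u - 1) * (1 - x) ^ (v - 1) = beta u v := by
  rw [beta_eq_betaIntegralReal u v hu hv, betaIntegral_ofReal_eq_integral_Ioo,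
    integral_complex_ofReal, Complex.ofReal_re]

end Beta

section BetaPrime

variable {u v : ℝ}

lemma hasDerivAt_div_one_sub {x : ℝ} (hx : x ≠ 1) :
    HasDerivAt (fun y => y / (1 - y)) ((1 - x) ^ 2)⁻¹ x := by
  refine ((hasDerivAt_id' x).fun_div ((hasDerivAt_id' x).const_sub 1)
    (sub_ne_zero.2 hx.symm)).congr_deriv ?_
  ring

lemma injOn_div_one_sub : InjOn (fun y : ℝ => y / (1 - y)) (Iio 1) := by
  intro x hx y hy h
  have hx' : 1 - x ≠ 0 := by linarith [mem_Iio.1 hx]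
  have hy' : 1 - y ≠ 0 := by linarith [mem_Iio.1 hy]
  field_simp at h
  linarith

lemma image_div_one_sub_Ioo : (fun y : ℝ => y / (1 - y)) '' Ioo 0 1 = Ioi 0 := by
  ext t
  refine ⟨?_, fun (ht : 0 < t) => ⟨t / (1 + t), ⟨by positivity, ?_⟩, ?_⟩⟩
  · rintro ⟨x, hx, rfl⟩
    exact div_pos hx.1 (sub_pos.2 hx.2)
  · rw [div_lt_one (by positivity)]; linarith
  · have : (0 : ℝ) < 1 + t := by positivity
    field_simp
    ring

lemma abs_deriv_mul_rpow_mul_one_add_rpow {x : ℝ} (hx : x ∈ Ioo (0 : ℝ) 1) :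
    |((1 - x) ^ 2)⁻¹| * ((x / (1 - x)) ^ (u - 1) * (1 + x / (1 - x)) ^ (-(u + v))) =
      x ^ (u - 1) * (1 - x) ^ (v - 1) := by
  have h1x : 0 < 1 - x := sub_pos.2 hx.2
  have hsum : 1 + x / (1 - x) = (1 - x)⁻¹ := by field_simp; ring
  rw [hsum, inv_rpow h1x.le, ← rpow_neg h1x.le, neg_neg, div_rpow hx.1.le h1x.le,
    abs_of_pos (by positivity), ← rpow_two, ← rpow_neg h1x.le, div_eq_mul_inv,
    ← rpow_neg h1x.le, mul_left_comm, ← mul_assoc, mul_assoc, ← rpow_add h1x, mul_assoc,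
    ← rpow_add h1x]
  ring_nf

theorem integrableOn_rpow_mul_one_add_rpow (hu : 0 < u) (hv : 0 < v) :
    IntegrableOn (fun t => t ^ (u - 1) * (1 + t) ^ (-(u + v))) (Ioi (0 : ℝ)) := by
  rw [← image_div_one_sub_Ioo, integrableOn_image_iff_integrableOn_abs_deriv_smul
    measurableSet_Ioo (fun x hx => (hasDerivAt_div_one_sub hx.2.ne).hasDerivWithinAt)
    (injOn_div_one_sub.mono Ioo_subset_Iio_self)]
  exact (integrableOn_rpow_mul_one_sub_rpow hu hv).congr_fun
    (fun x hx => (abs_deriv_mul_rpow_mul_one_add_rpow hx).symm) measurableSet_Ioo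

theorem integral_rpow_mul_one_add_rpow (hu : 0 < u) (hv : 0 < v) :
    ∫ t in Ioi (0 : ℝ), t ^ (u - 1) * (1 + t) ^ (-(u + v)) = beta u v := by
  rw [← image_div_one_sub_Ioo, integral_image_eq_integral_abs_deriv_smul
    measurableSet_Ioo (fun x hx => (hasDerivAt_div_one_sub hx.2.ne).hasDerivWithinAt)
    (injOn_div_one_sub.mono Ioo_subset_Iio_self), ← integral_rpow_mul_one_sub_rpow hu hv]
  exact setIntegral_congr_fun measurableSet_Ioo fun x hx => abs_deriv_mul_rpow_mul_one_add_rpow hx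

lemma rpow_mul_one_add_mul_rpow_eq {c t : ℝ} (hc : 0 < c) (ht : 0 ≤ t) :
    t ^ (u - 1) * (1 + c * t) ^ (-(u + v)) =
      c ^ (1 - u) * ((c * t) ^ (u - 1) * (1 + c * t) ^ (-(u + v))) := by
  rw [mul_rpow hc.le ht, ← mul_assoc, ← mul_assoc, ← rpow_add hc]
  simp

theorem integrableOn_rpow_mul_one_add_mul_rpow {c : ℝ} (hu : 0 < u) (hv : 0 < v) (hc : 0 < c) :
    IntegrableOn (fun t => t ^ (u - 1) * (1 + c * t) ^ (-(u + v))) (Ioi (0 : ℝ)) := by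
  have h : IntegrableOn (fun t => (c * t) ^ (u - 1) * (1 + c * t) ^ (-(u + v))) (Ioi 0) :=
    (integrableOn_Ioi_comp_mul_left_iff (fun t => t ^ (u - 1) * (1 + t) ^ (-(u + v))) 0 hc).2
      (by simpa using integrableOn_rpow_mul_one_add_rpow hu hv)
  exact IntegrableOn.congr_fun (h.const_mul (c ^ (1 - u)))
    (fun t ht => (rpow_mul_one_add_mul_rpow_eq hc (le_of_lt ht)).symm) measurableSet_Ioi

theorem integral_rpow_mul_one_add_mul_rpow {c : ℝ} (hu : 0 < u) (hv : 0 < v) (hc : 0 < c) :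
    ∫ t in Ioi (0 : ℝ), t ^ (u - 1) * (1 + c * t) ^ (-(u + v)) =
      c ^ (-u) * beta u v := by
  rw [setIntegral_congr_fun measurableSet_Ioi fun t ht => rpow_mul_one_add_mul_rpow_eq hc
    (le_of_lt ht), integral_const_mul,
    integral_comp_mul_left_Ioi (fun t => t ^ (u - 1) * (1 + t) ^ (-(u + v))) 0 hc, mul_zero,
    integral_rpow_mul_one_add_rpow hu hv, smul_eq_mul, ← mul_assoc, ← rpow_neg_one,
    ← rpow_add hc]
  ring_nf

end BetaPrime

theorem integral_integral_swap_of_nonneg {α β : Type*} [MeasurableSpace α] [MeasurableSpace β]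
    {μ : Measure α} {ν : Measure β} [SFinite μ] [SFinite ν] {F : α → β → ℝ}
    (hF : AEStronglyMeasurable (Function.uncurry F) (μ.prod ν))
    (hF_nonneg : ∀ᵐ y ∂ν, ∀ᵐ x ∂μ, 0 ≤ F x y)
    (hF_slice : ∀ᵐ y ∂ν, Integrable (F · y) μ)
    (hF_int : Integrable (fun y => ∫ x, F x y ∂μ) ν) :
    ∫ x, ∫ y, F x y ∂ν ∂μ = ∫ y, ∫ x, F x y ∂μ ∂ν := by
  refine integral_integral_swap ((integrable_prod_iff' hF).2 ⟨hF_slice, hF_int.congr ?_⟩)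
  filter_upwards [hF_nonneg] with y hy
  exact integral_congr_ae (hy.mono fun x hx => (norm_of_nonneg hx).symm)

noncomputable def betaIIBetaIKernel (a₀ a₁ a₂ f b : ℝ) : ℝ :=
  f ^ (a₁ - 1) * b ^ (a₂ - 1) * (1 + (1 - b) * f) ^ (-(a₀ + a₁ + a₂)) * (1 - b) ^ (a₀ + a₁ - 1)

section Kernel

variable {a₀ a₁ a₂ b : ℝ}

lemma betaIIBetaIKernel_eq (f : ℝ) : betaIIBetaIKernel a₀ a₁ a₂ f b =
    b ^ (a₂ - 1) * (1 - b) ^ (a₀ + a₁ - 1) *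
      (f ^ (a₁ - 1) * (1 + (1 - b) * f) ^ (-(a₁ + (a₂ + a₀)))) := by
  rw [betaIIBetaIKernel, show a₁ + (a₂ + a₀) = a₀ + a₁ + a₂ by ring]
  ring

lemma measurable_betaIIBetaIKernel :
    Measurable (Function.uncurry (betaIIBetaIKernel a₀ a₁ a₂)) := by
  unfold betaIIBetaIKernel
  fun_prop

lemma betaIIBetaIKernel_nonneg {f : ℝ} (hf : 0 ≤ f) (hb : b ∈ Ioo (0 : ℝ) 1) :
    0 ≤ betaIIBetaIKernel a₀ a₁ a₂ f b := by
  have hb₀ : 0 < b := hb.1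
  have hb₁ : 0 ≤ 1 - b := sub_nonneg.2 hb.2.le
  unfold betaIIBetaIKernel
  positivity

lemma integrableOn_betaIIBetaIKernel_left (h₀ : 0 < a₀) (h₁ : 0 < a₁) (h₂ : 0 < a₂)
    (hb : b ∈ Ioo (0 : ℝ) 1) :
    IntegrableOn (betaIIBetaIKernel a₀ a₁ a₂ · b) (Ioi 0) := by
  simp_rw [betaIIBetaIKernel_eq]
  exact (integrableOn_rpow_mul_one_add_mul_rpow h₁ (by positivity) (sub_pos.2 hb.2)).const_mul _

lemma integral_betaIIBetaIKernel_left (h₀ : 0 < a₀) (h₁ : 0 < a₁) (h₂ : 0 < a₂)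
    (hb : b ∈ Ioo (0 : ℝ) 1) :
    ∫ f in Ioi 0, betaIIBetaIKernel a₀ a₁ a₂ f b =
      beta a₁ (a₂ + a₀) * (b ^ (a₂ - 1) * (1 - b) ^ (a₀ - 1)) := by
  have h1b : 0 < 1 - b := sub_pos.2 hb.2
  simp_rw [betaIIBetaIKernel_eq]
  rw [integral_const_mul, integral_rpow_mul_one_add_mul_rpow h₁ (by positivity) h1b]
  rw [show (1 - b) ^ (a₀ - 1) = (1 - b) ^ (a₀ + a₁ - 1) * (1 - b) ^ (-a₁) by
    rw [← rpow_add h1b]; ring_nf]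
  ring

end Kernel

theorem beta_II_beta_I_normalisation (a₀ a₁ a₂ : ℝ)
    (h₀ : 0 < a₀) (h₁ : 0 < a₁) (h₂ : 0 < a₂) :
    ∫ f in Ioi (0 : ℝ), ∫ b in Ioo (0 : ℝ) 1,
      f ^ (a₁ - 1) * b ^ (a₂ - 1) * (1 + (1 - b) * f) ^ (-(a₀ + a₁ + a₂)) *
        (1 - b) ^ (a₀ + a₁ - 1) =
    Real.Gamma a₀ * Real.Gamma a₁ * Real.Gamma a₂ / Real.Gamma (a₀ + a₁ + a₂) := by
  change ∫ f in Ioi 0, ∫ b in Ioo 0 1, betaIIBetaIKernel a₀ a₁ a₂ f b = _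
  have h_slice : ∀ b ∈ Ioo (0 : ℝ) 1, ∫ f in Ioi 0, betaIIBetaIKernel a₀ a₁ a₂ f b =
      beta a₁ (a₂ + a₀) * (b ^ (a₂ - 1) * (1 - b) ^ (a₀ - 1)) :=
    fun b hb => integral_betaIIBetaIKernel_left h₀ h₁ h₂ hb
  rw [integral_integral_swap_of_nonneg measurable_betaIIBetaIKernel.aestronglyMeasurable
      ?nonneg ?slice ?int, setIntegral_congr_fun measurableSet_Ioo h_slice, integral_const_mul,
    integral_rpow_mul_one_sub_rpow h₂ h₀]
  case nonneg =>
    filter_upwards [ae_restrict_mem measurableSet_Ioo] with b hb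
    filter_upwards [ae_restrict_mem measurableSet_Ioi] with f hf
    exact betaIIBetaIKernel_nonneg (le_of_lt hf) hb
  case slice =>
    filter_upwards [ae_restrict_mem measurableSet_Ioo] with b hb
    exact integrableOn_betaIIBetaIKernel_left h₀ h₁ h₂ hb
  case int =>
    exact IntegrableOn.congr_fun ((integrableOn_rpow_mul_one_sub_rpow h₂ h₀).const_mul _)
      (fun b hb => (h_slice b hb).symm) measurableSet_Ioo
  have hΓ : Gamma (a₂ + a₀) ≠ 0 := (Gamma_pos_of_pos (add_pos h₂ h₀)).ne'
  simp only [beta]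
  field_simp
  ring_nf
end
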